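/- (Theorem 2) Let γ₁,…,γ_k ∈ ℂ be nonzero and define the polynomial f(γ) = (−1)^{k−1} (∏_{j=1}^k γⱼ)^{−1} ∏_{j=1}^k (γ − γⱼ). Then f(0) = −1 and f(γⱼ) = 0 for every j, and there exists z ∈ K_k(A, r₀) such that ‖r₀ − A z‖₂ ≤ ‖W‖₂ · ‖(f(λ₁), f(λ₂), …, f(λ_d))ᵀ‖₂. -/

import Mathlib

/-!
A polynomial `p` of degree at most `k` with `p(0) = 1` is `1 + X q` with `deg q < k`, so
`z = -q(A) r₀` lies in `K_k(A, r₀)` and `r₀ - A z = p(A) r₀`. On the eigen-expansion of `r₀`,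
`p(A) r₀ = ∑ cᵢ p(λᵢ) vᵢ = W (p(λ₁), …, p(λ_d))ᵀ`, whose norm is at most `‖W‖₂ ‖(p(λᵢ))ᵢ‖₂`.
The theorem is the case `p = -f`.
-/

/-- The Euclidean (ℓ²) norm of a complex vector. -/
noncomputable def euclNorm {m : ℕ} (x : Fin m → ℂ) : ℝ :=
  Real.sqrt (∑ t, ‖x t‖ ^ 2)

/-- The operator 2-norm of a complex matrix (induced by Euclidean norms). -/
noncomputable def l2OpNorm {m k : ℕ} (W : Matrix (Fin m) (Fin k) ℂ) : ℝ :=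
  ‖LinearMap.toContinuousLinearMap (Matrix.toEuclideanLin W)‖

open Polynomial Matrix

lemma euclNorm_eq_norm_toLp {m : ℕ} (x : Fin m → ℂ) : euclNorm x = ‖WithLp.toLp 2 x‖ := by
  rw [EuclideanSpace.norm_eq]; rfl

lemma euclNorm_neg {m : ℕ} (x : Fin m → ℂ) : euclNorm (-x) = euclNorm x := by
  simp [euclNorm_eq_norm_toLp]

lemma euclNorm_mulVec_le {m k : ℕ} (W : Matrix (Fin m) (Fin k) ℂ) (y : Fin k → ℂ) :
    euclNorm (W *ᵥ y) ≤ l2OpNorm W * euclNorm y := by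
  simpa [euclNorm_eq_norm_toLp, l2OpNorm] using
    (LinearMap.toContinuousLinearMap (toEuclideanLin W)).le_opNorm (WithLp.toLp 2 y)

namespace Matrix

variable {R ι n : Type*} [CommRing R] [Fintype n] [DecidableEq n]

lemma aeval_mulVec_of_mulVec_eq_smul {A : Matrix n n R} {x : n → R} {μ : R}
    (hx : A *ᵥ x = μ • x) (p : R[X]) : aeval A p *ᵥ x = p.eval μ • x := by
  have h : aeval (toLinAlgEquiv' A) p x = aeval A p *ᵥ x := by
    rw [aeval_algHom_apply]; rfl
  exact h ▸ Module.End.aeval_apply_of_mem_apply_eq_smul hx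

lemma aeval_mulVec_sum_smul_of_mulVec_eq_smul [Fintype ι] {A : Matrix n n R} {v : ι → n → R}
    {μ : ι → R} (hv : ∀ i, A *ᵥ v i = μ i • v i) (c : ι → R) (p : R[X]) :
    aeval A p *ᵥ ∑ i, c i • v i = (of fun t i => c i * v i t) *ᵥ fun i => p.eval (μ i) := by
  simp_rw [mulVec_sum, mulVec_smul, aeval_mulVec_of_mulVec_eq_smul (hv _), smul_smul]
  ext t
  simp [mulVec, dotProduct, mul_comm, mul_assoc]

def krylov (A : Matrix n n R) (r : n → R) (k : ℕ) : Submodule R (n → R) :=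
  Submodule.span R (Set.range fun j : Fin k => (A ^ (j : ℕ)) *ᵥ r)

lemma aeval_mulVec_mem_krylov (A : Matrix n n R) (r : n → R) {k : ℕ} {q : R[X]}
    (hq : q.degree < k) : aeval A q *ᵥ r ∈ krylov A r k := by
  rcases eq_or_ne q 0 with rfl | hq0
  · simp
  rw [aeval_eq_sum_range' ((natDegree_lt_iff_degree_lt hq0).2 hq), sum_mulVec]
  refine Submodule.sum_mem _ fun j hj => ?_
  rw [smul_mulVec]
  exact Submodule.smul_mem _ _ (Submodule.subset_span ⟨⟨j, Finset.mem_range.mp hj⟩, rfl⟩)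

lemma exists_mem_krylov_sub_mulVec_eq_aeval (A : Matrix n n R) (r : n → R) {k : ℕ} {p : R[X]}
    (hp0 : p.eval 0 = 1) (hp : p.degree ≤ k) :
    ∃ z ∈ krylov A r k, r - A *ᵥ z = aeval A p *ᵥ r := by
  have hdivX : p.divX.degree < k := by
    rcases eq_or_ne p 0 with rfl | hne
    · simp
    · exact (degree_divX_lt hne).trans_le hp
  refine ⟨-(aeval A p.divX *ᵥ r), Submodule.neg_mem _ (aeval_mulVec_mem_krylov A r hdivX), ?_⟩
  conv_rhs => rw [← X_mul_divX_add p]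
  rw [coeff_zero_eq_eval_zero, hp0]
  simp [add_mulVec, ← mulVec_mulVec, mulVec_neg, sub_eq_add_neg, add_comm]

end Matrix

section ClusterPoly

variable {K : Type*} [Field K] {k : ℕ}

noncomputable def clusterPoly (γ : Fin k → K) : K[X] :=
  C ((-1) ^ (k - 1) * (∏ j, γ j)⁻¹) * ∏ j, (X - C (γ j))

lemma eval_clusterPoly (γ : Fin k → K) (x : K) :
    (clusterPoly γ).eval x = (-1) ^ (k - 1) * (∏ j, γ j)⁻¹ * ∏ j, (x - γ j) := by
  simp [clusterPoly, eval_prod]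

lemma eval_clusterPoly_self (γ : Fin k → K) (j : Fin k) : (clusterPoly γ).eval (γ j) = 0 := by
  rw [eval_clusterPoly]
  exact mul_eq_zero_of_right _ (Finset.prod_eq_zero (Finset.mem_univ j) (sub_self _))

lemma eval_zero_clusterPoly (hk : 1 ≤ k) {γ : Fin k → K} (hγ : ∀ j, γ j ≠ 0) :
    (clusterPoly γ).eval 0 = -1 := by
  obtain ⟨m, rfl⟩ : ∃ m, k = m + 1 := ⟨k - 1, by omega⟩
  have hprod : ∏ j, γ j ≠ 0 := Finset.prod_ne_zero_iff.mpr fun j _ => hγ j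
  simp only [eval_clusterPoly, zero_sub, Finset.prod_neg, Finset.card_univ, Fintype.card_fin,
    Nat.add_sub_cancel]
  field_simp
  rw [← pow_add, Odd.neg_one_pow ⟨m, by ring⟩]

lemma degree_clusterPoly_le (γ : Fin k → K) : (clusterPoly γ).degree ≤ k :=
  (degree_mul_le _ _).trans <| by
    simpa [degree_prod] using add_le_add_left (degree_C_le (a := (-1) ^ (k - 1) * (∏ j, γ j)⁻¹)) k

end ClusterPoly

theorem gmres_residual_cluster_polynomial_bound_general
    (n d : ℕ) (A : Matrix (Fin n) (Fin n) ℂ)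
    (v : Fin d → (Fin n → ℂ)) (lam : Fin d → ℂ) (c : Fin d → ℂ)
    (heig : ∀ i, A.mulVec (v i) = lam i • v i)
    (r₀ : Fin n → ℂ) (hr₀ : r₀ = ∑ i, c i • v i)
    (W : Matrix (Fin n) (Fin d) ℂ) (hW : W = Matrix.of fun t i => c i * v i t)
    (k : ℕ) (hk : 1 ≤ k)
    (γ : Fin k → ℂ) (hγ : ∀ j, γ j ≠ 0)
    (f : ℂ → ℂ)
    (hf : f = fun x => (-1 : ℂ) ^ (k - 1) * (∏ j, γ j)⁻¹ * ∏ j, (x - γ j)) :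
    f 0 = -1 ∧ (∀ j, f (γ j) = 0) ∧
      ∃ z ∈ Submodule.span ℂ (Set.range fun j : Fin k => (A ^ (j : ℕ)).mulVec r₀),
        euclNorm (r₀ - A.mulVec z) ≤ l2OpNorm W * euclNorm (fun i => f (lam i)) := by
  obtain rfl : f = fun x => (clusterPoly γ).eval x := by
    simp only [hf, eval_clusterPoly]
  refine ⟨eval_zero_clusterPoly hk hγ, eval_clusterPoly_self γ, ?_⟩
  obtain ⟨z, hz, hres⟩ := exists_mem_krylov_sub_mulVec_eq_aeval A r₀ (p := -clusterPoly γ)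
    (by rw [eval_neg, eval_zero_clusterPoly hk hγ, neg_neg])
    (by rw [degree_neg]; exact degree_clusterPoly_le γ)
  refine ⟨z, hz, ?_⟩
  rw [hres, hr₀, aeval_mulVec_sum_smul_of_mulVec_eq_smul heig, ← hW]
  calc _ ≤ l2OpNorm W * euclNorm (fun i => (-clusterPoly γ).eval (lam i)) :=
        euclNorm_mulVec_le W _
    _ = _ := by simp only [eval_neg, ← Pi.neg_def, euclNorm_neg]

/-- Theorem 2: with `f(γ) = (−1)^{k−1} (∏ γⱼ)⁻¹ ∏ (γ − γⱼ)` for nonzero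
`γ₁,…,γ_k`, we have `f(0) = −1`, `f(γⱼ) = 0`, and there is `z ∈ K_k(A, r₀)` with
`‖r₀ − A z‖₂ ≤ ‖W‖₂ ‖(f(λ₁),…,f(λ_d))ᵀ‖₂`. -/
theorem gmres_residual_cluster_polynomial_bound
    (n d : ℕ) (A : Matrix (Fin n) (Fin n) ℂ)
    (v : Fin d → (Fin n → ℂ)) (lam : Fin d → ℂ) (c : Fin d → ℂ)
    (hunit : ∀ i, euclNorm (v i) = 1)
    (heig : ∀ i, A.mulVec (v i) = lam i • v i)
    (hnz : ∀ i, lam i ≠ 0) (hdist : Function.Injective lam)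
    (r₀ : Fin n → ℂ) (hr₀ : r₀ = ∑ i, c i • v i)
    (W : Matrix (Fin n) (Fin d) ℂ) (hW : W = Matrix.of fun t i => c i * v i t)
    (k : ℕ) (hk : 1 ≤ k)
    (γ : Fin k → ℂ) (hγ : ∀ j, γ j ≠ 0)
    (f : ℂ → ℂ)
    (hf : f = fun x => (-1 : ℂ) ^ (k - 1) * (∏ j, γ j)⁻¹ * ∏ j, (x - γ j)) :
    f 0 = -1 ∧ (∀ j, f (γ j) = 0) ∧
      ∃ z ∈ Submodule.span ℂ (Set.range fun j : Fin k => (A ^ (j : ℕ)).mulVec r₀),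
        euclNorm (r₀ - A.mulVec z) ≤ l2OpNorm W * euclNorm (fun i => f (lam i)) :=
  gmres_residual_cluster_polynomial_bound_general n d A v lam c heig r₀ hr₀ W hW k hk γ hγ f hf
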